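/- (Permutation equivariance of one SCCNN layer) Let σ : ℝ → ℝ be applied entrywise, H_{k,d}, H_k, H_{k,u} be polynomials in the lower/upper Laplacians as specified, and define f(x_{k-1}, x_k, x_{k+1}) = σ(H_{k,d} B_kᵀ x_{k-1} + H_k x_k + H_{k,u} B_{k+1} x_{k+1}). If the incidence matrices are permuted as B̄_k = P_{k-1} B_k P_kᵀ, B̄_{k+1} = P_k B_{k+1} P_{k+1}ᵀ (with permutation matrices P_j) and the filters are formed with the same coefficients from the permuted Laplacians, then the permuted layer satisfies f̄(P_{k-1} x_{k-1}, P_k x_k, P_{k+1} x_{k+1}) = P_k f(x_{k-1}, x_k, x_{k+1}). -/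
import Mathlib

open Matrix

/-- The simplicial convolutional filter `H_k = ∑_t w_{d,t} L_d^t + ∑_t w_{u,t} L_u^t`. -/
noncomputable def scf {n : ℕ} (wd wu : ℕ → ℝ) (Td Tu : ℕ)
    (Ld Lu : Matrix (Fin n) (Fin n) ℝ) : Matrix (Fin n) (Fin n) ℝ :=
  ∑ t ∈ Finset.range (Td + 1), wd t • Ld ^ t + ∑ t ∈ Finset.range (Tu + 1), wu t • Lu ^ t

/-- A one-sided filter `∑_t w_t L^t`. -/
noncomputable def scf1 {n : ℕ} (w : ℕ → ℝ) (T : ℕ)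
    (L : Matrix (Fin n) (Fin n) ℝ) : Matrix (Fin n) (Fin n) ℝ :=
  ∑ t ∈ Finset.range (T + 1), w t • L ^ t

lemma permOrth {n : ℕ} (p : Equiv.Perm (Fin n)) :
    (p.permMatrix ℝ)ᵀ * p.permMatrix ℝ = 1 := by
  rw [Equiv.Perm.permMatrix, ← PEquiv.toMatrix_symm, ← Equiv.toPEquiv_symm,
    ← PEquiv.toMatrix_trans, ← Equiv.toPEquiv_trans]
  simp [Equiv.toPEquiv_refl]

lemma matConjPow {n : ℕ} (P : Matrix (Fin n) (Fin n) ℝ) (hP : Pᵀ * P = 1)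
    (L : Matrix (Fin n) (Fin n) ℝ) (t : ℕ) :
    (P * L * Pᵀ) ^ t = P * L ^ t * Pᵀ := by
  have hP' : P * Pᵀ = 1 := mul_eq_one_comm.mp hP
  induction t with
  | zero => simp [hP']
  | succ t ih =>
    rw [pow_succ, ih, pow_succ]
    simp only [Matrix.mul_assoc]
    rw [← Matrix.mul_assoc Pᵀ P, hP, Matrix.one_mul]

lemma scf1_conj {n : ℕ} (w : ℕ → ℝ) (T : ℕ) (P : Matrix (Fin n) (Fin n) ℝ)
    (hP : Pᵀ * P = 1) (L : Matrix (Fin n) (Fin n) ℝ) :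
    scf1 w T (P * L * Pᵀ) = P * scf1 w T L * Pᵀ := by
  simp only [scf1, Finset.sum_mul, Finset.mul_sum]
  refine Finset.sum_congr rfl fun t _ => ?_
  rw [matConjPow P hP, Matrix.mul_smul, Matrix.smul_mul]

lemma scf_conj {n : ℕ} (wd wu : ℕ → ℝ) (Td Tu : ℕ) (P : Matrix (Fin n) (Fin n) ℝ)
    (hP : Pᵀ * P = 1) (Ld Lu : Matrix (Fin n) (Fin n) ℝ) :
    scf wd wu Td Tu (P * Ld * Pᵀ) (P * Lu * Pᵀ) = P * scf wd wu Td Tu Ld Lu * Pᵀ := by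
  have h1 := scf1_conj wd Td P hP Ld
  have h2 := scf1_conj wu Tu P hP Lu
  simp only [scf1] at h1 h2
  simp only [scf, Matrix.mul_add, Matrix.add_mul, h1, h2]

lemma perm_mulVec {n : ℕ} (p : Equiv.Perm (Fin n)) (v : Fin n → ℝ) :
    (p.permMatrix ℝ).mulVec v = fun i => v (p i) := by
  funext i
  simp [Equiv.Perm.permMatrix, Matrix.mulVec, dotProduct, PEquiv.toMatrix_apply,
    Equiv.toPEquiv_apply]

/-- Permutation equivariance of one SCCNN layer:
`f̄(P_{k-1} x_{k-1}, P_k x_k, P_{k+1} x_{k+1}) = P_k f(x_{k-1}, x_k, x_{k+1})`, where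
`f̄` is the layer built with the same coefficients from the permuted incidence
matrices `B̄_k = P_{k-1} B_k Pₖᵀ`, `B̄_{k+1} = P_k B_{k+1} P_{k+1}ᵀ`. -/
theorem sccnn_permutation_equivariance {n0 n1 n2 : ℕ}
    (Bk : Matrix (Fin n0) (Fin n1) ℝ) (Bk1 : Matrix (Fin n1) (Fin n2) ℝ)
    (σ : ℝ → ℝ)
    (p0 : Equiv.Perm (Fin n0)) (p1 : Equiv.Perm (Fin n1)) (p2 : Equiv.Perm (Fin n2))
    (wd wu wd' wu' : ℕ → ℝ) (Td Tu : ℕ)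
    (x0 : Fin n0 → ℝ) (x1 : Fin n1 → ℝ) (x2 : Fin n2 → ℝ)
    (P0 : Matrix (Fin n0) (Fin n0) ℝ) (P1 : Matrix (Fin n1) (Fin n1) ℝ)
    (P2 : Matrix (Fin n2) (Fin n2) ℝ)
    (hP0 : P0 = p0.permMatrix ℝ) (hP1 : P1 = p1.permMatrix ℝ) (hP2 : P2 = p2.permMatrix ℝ)
    (Bkb : Matrix (Fin n0) (Fin n1) ℝ) (Bk1b : Matrix (Fin n1) (Fin n2) ℝ)
    (hBkb : Bkb = P0 * Bk * P1ᵀ) (hBk1b : Bk1b = P1 * Bk1 * P2ᵀ) :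
    (fun i => σ (((scf1 wd' Td (Bkbᵀ * Bkb)).mulVec (Bkbᵀ.mulVec (P0.mulVec x0))
        + (scf wd wu Td Tu (Bkbᵀ * Bkb) (Bk1b * Bk1bᵀ)).mulVec (P1.mulVec x1)
        + (scf1 wu' Tu (Bk1b * Bk1bᵀ)).mulVec (Bk1b.mulVec (P2.mulVec x2))) i))
      = P1.mulVec (fun i => σ (((scf1 wd' Td (Bkᵀ * Bk)).mulVec (Bkᵀ.mulVec x0)
        + (scf wd wu Td Tu (Bkᵀ * Bk) (Bk1 * Bk1ᵀ)).mulVec x1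
        + (scf1 wu' Tu (Bk1 * Bk1ᵀ)).mulVec (Bk1.mulVec x2)) i)) := by
  have h0 : P0ᵀ * P0 = 1 := hP0 ▸ permOrth p0
  have h1o : P1ᵀ * P1 = 1 := hP1 ▸ permOrth p1
  have h2o : P2ᵀ * P2 = 1 := hP2 ▸ permOrth p2
  have h1o' : P1 * P1ᵀ = 1 := mul_eq_one_comm.mp h1o
  have hLd : Bkbᵀ * Bkb = P1 * (Bkᵀ * Bk) * P1ᵀ := by
    subst hBkb
    simp only [Matrix.transpose_mul, Matrix.transpose_transpose, Matrix.mul_assoc]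
    rw [← Matrix.mul_assoc P0ᵀ P0, h0, Matrix.one_mul]
  have hLu : Bk1b * Bk1bᵀ = P1 * (Bk1 * Bk1ᵀ) * P1ᵀ := by
    subst hBk1b
    simp only [Matrix.transpose_mul, Matrix.transpose_transpose, Matrix.mul_assoc]
    rw [← Matrix.mul_assoc P2ᵀ P2, h2o, Matrix.one_mul]
  have e1 : Bkbᵀ.mulVec (P0.mulVec x0) = P1.mulVec (Bkᵀ.mulVec x0) := by
    subst hBkb
    simp only [Matrix.transpose_mul, Matrix.transpose_transpose, Matrix.mulVec_mulVec,
      Matrix.mul_assoc]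
    rw [h0, Matrix.mul_one]
  have e2 : Bk1b.mulVec (P2.mulVec x2) = P1.mulVec (Bk1.mulVec x2) := by
    subst hBk1b
    simp only [Matrix.mulVec_mulVec, Matrix.mul_assoc]
    rw [h2o, Matrix.mul_one]
  have cancel1 : ∀ (v : Fin n1 → ℝ), P1ᵀ.mulVec (P1.mulVec v) = v := by
    intro v
    rw [Matrix.mulVec_mulVec, h1o, Matrix.one_mulVec]
  have key : (scf1 wd' Td (Bkbᵀ * Bkb)).mulVec (Bkbᵀ.mulVec (P0.mulVec x0))
        + (scf wd wu Td Tu (Bkbᵀ * Bkb) (Bk1b * Bk1bᵀ)).mulVec (P1.mulVec x1)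
        + (scf1 wu' Tu (Bk1b * Bk1bᵀ)).mulVec (Bk1b.mulVec (P2.mulVec x2))
      = P1.mulVec ((scf1 wd' Td (Bkᵀ * Bk)).mulVec (Bkᵀ.mulVec x0)
        + (scf wd wu Td Tu (Bkᵀ * Bk) (Bk1 * Bk1ᵀ)).mulVec x1
        + (scf1 wu' Tu (Bk1 * Bk1ᵀ)).mulVec (Bk1.mulVec x2)) := by
    rw [hLd, hLu, scf1_conj _ _ _ h1o, scf1_conj _ _ _ h1o, scf_conj _ _ _ _ _ h1o,
      e1, e2, Matrix.mulVec_add, Matrix.mulVec_add]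
    simp only [← Matrix.mulVec_mulVec, cancel1]
  rw [key]
  subst hP1
  rw [perm_mulVec, perm_mulVec]
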